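/- arXiv:2306.04240 — 2 statements merged into one kernel-verified Lean document; each statement's English description precedes it below -/
import Mathlib

section
/- For third-order tensors A ∈ R^{m×n×p} and B ∈ R^{n×s×p}, the block circulant matrix of their T-product equals the matrix product of their block circulant matrices: bcirc(A * B) = bcirc(A) · bcirc(B). -/
open Matrix

/-- Block circulant matrix of a third-order tensor, given by its frontal slices
(zero-based): the `(i, j)` block is the slice `A (i - j)` (subtraction mod `p`). -/
def bcirc {R : Type*} {m n p : ℕ} (A : Fin p → Matrix (Fin m) (Fin n) R) :
    Matrix (Fin p × Fin m) (Fin p × Fin n) R :=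
  Matrix.of fun ir jc => A (ir.1 - jc.1) ir.2 jc.2

/-- Stack the frontal slices vertically. -/
def unfoldT {R : Type*} {n s p : ℕ} (B : Fin p → Matrix (Fin n) (Fin s) R) :
    Matrix (Fin p × Fin n) (Fin s) R :=
  Matrix.of fun ir c => B ir.1 ir.2 c

/-- Inverse of `unfoldT`. -/
def foldT {R : Type*} {m s p : ℕ} (M : Matrix (Fin p × Fin m) (Fin s) R) :
    Fin p → Matrix (Fin m) (Fin s) R :=
  fun k => Matrix.of fun r c => M (k, r) c

/-- The tensor T-product `A * B := fold (bcirc A · unfold B)`. -/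
def tProd {R : Type*} [CommRing R] {m n s p : ℕ}
    (A : Fin p → Matrix (Fin m) (Fin n) R) (B : Fin p → Matrix (Fin n) (Fin s) R) :
    Fin p → Matrix (Fin m) (Fin s) R :=
  foldT (bcirc A * unfoldT B)

/-- Tensor transpose: transpose every frontal slice and reverse the order of
slices `2, …, p` (zero-based: slice `k` of `Aᵀ` is `(A (-k))ᵀ`). -/
def tT {R : Type*} {m n p : ℕ} (A : Fin p → Matrix (Fin m) (Fin n) R) :
    Fin p → Matrix (Fin n) (Fin m) R :=
  fun k => (A (-k))ᵀ

/-- The identity tensor: first frontal slice is the identity matrix, the others vanish. -/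
def idT {R : Type*} [CommRing R] {n p : ℕ} [NeZero p] :
    Fin p → Matrix (Fin n) (Fin n) R :=
  fun k => if k = 0 then 1 else 0


/-! Both sides are block circulant with `(i, j)` block the circular convolution
`∑ₖ A (i - k) * B (k - j)`; substituting `k ↦ k + j` turns it into the `(i - j)`-th slice
`∑ₗ A (i - j - l) * B l` of the T-product. -/

section

variable {R : Type*} {m n s p : ℕ}

theorem bcirc_apply (A : Fin p → Matrix (Fin m) (Fin n) R) (i j : Fin p) (r : Fin m)
    (c : Fin n) : bcirc A (i, r) (j, c) = A (i - j) r c :=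
  rfl

theorem bcirc_mul_bcirc_apply [NonUnitalNonAssocSemiring R]
    (A : Fin p → Matrix (Fin m) (Fin n) R) (B : Fin p → Matrix (Fin n) (Fin s) R)
    (i j : Fin p) (r : Fin m) (c : Fin s) :
    (bcirc A * bcirc B) (i, r) (j, c) = (∑ k, A (i - k) * B (k - j)) r c := by
  simp only [mul_apply, Fintype.sum_prod_type, Matrix.sum_apply, bcirc_apply]

theorem tProd_apply [CommRing R] (A : Fin p → Matrix (Fin m) (Fin n) R)
    (B : Fin p → Matrix (Fin n) (Fin s) R) (k : Fin p) :
    tProd A B k = ∑ l, A (k - l) * B l := by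
  ext r c
  simp only [tProd, foldT, unfoldT, of_apply, mul_apply, Fintype.sum_prod_type,
    Matrix.sum_apply, bcirc_apply]

theorem sum_sub_mul_sub_eq_sum_sub_sub_mul [NeZero p] [NonUnitalNonAssocSemiring R]
    (A : Fin p → Matrix (Fin m) (Fin n) R) (B : Fin p → Matrix (Fin n) (Fin s) R)
    (i j : Fin p) : ∑ k, A (i - k) * B (k - j) = ∑ l, A (i - j - l) * B l :=
  Fintype.sum_equiv (Equiv.subRight j) _ _ fun k => by
    rw [Equiv.subRight_apply, sub_sub_sub_cancel_right]

end

/-- bcirc of a T-product is the product of the bcircs. -/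
theorem bcirc_tProd {m n s p : ℕ} (A : Fin p → Matrix (Fin m) (Fin n) ℝ)
    (B : Fin p → Matrix (Fin n) (Fin s) ℝ) :
    bcirc (tProd A B) = bcirc A * bcirc B := by
  rcases p.eq_zero_or_pos with rfl | hp
  · ext ⟨i, _⟩
    exact i.elim0
  have : NeZero p := ⟨hp.ne'⟩
  ext ⟨i, r⟩ ⟨j, c⟩
  rw [bcirc_mul_bcirc_apply, sum_sub_mul_sub_eq_sum_sub_sub_mul, bcirc_apply, tProd_apply]
end

section
/- Any block circulant matrix is block diagonalized by the Fourier transform: for A ∈ C^{m×n×p}, bcirc(A) = (F_p^H ⊗ I_m) · blockdiag(Â_1,…,Â_p) · (F_p ⊗ I_n), where Â_k are the frontal slices of the DFT of A taken along the third dimension. -/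
/-!
Writing `P_l` for the scalar circulant matrix with a single `1` on the `l`-th cyclic
diagonal, `bcirc A = ∑ₗ P_l ⊗ A_l` and `blockdiag(Â_1, …, Â_p) = ∑ₗ diag(ω^{lk})ₖ ⊗ A_l`.
By the orthogonality relations of the `p`-th roots of unity, `F_pᴴ diag(ω^{lk})ₖ F_p = P_l`,
and the mixed-product rule `(M ⊗ I)(D ⊗ A)(N ⊗ I) = MDN ⊗ A` puts the pieces together.
-/

open Matrix

/-- `ω = e^{-2πi/p}`, the primitive `p`-th root of unity. -/
noncomputable def omegaC (p : ℕ) : ℂ := Complex.exp (-(2 * Real.pi * Complex.I) / p)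

/-- The `k`-th frontal slice of the DFT of `A` along the third mode:
`Â_k = Σ_j ω^{jk} A^{(j)}`. -/
noncomputable def dftSlice {m n p : ℕ} (A : Fin p → Matrix (Fin m) (Fin n) ℂ) (k : Fin p) :
    Matrix (Fin m) (Fin n) ℂ :=
  ∑ j : Fin p, (omegaC p) ^ ((j : ℕ) * (k : ℕ)) • A j

open scoped Kronecker

/-- The unitary DFT matrix `F_p`. -/
noncomputable def dftMatrix (p : ℕ) : Matrix (Fin p) (Fin p) ℂ :=
  Matrix.of fun j k => ((Real.sqrt p : ℂ))⁻¹ * (omegaC p) ^ ((j : ℕ) * (k : ℕ))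

lemma geom_sum_eq_ite_of_pow_eq_one {K : Type*} [Field K] [DecidableEq K] {z : K} {n : ℕ}
    (hz : z ^ n = 1) : ∑ k ∈ Finset.range n, z ^ k = if z = 1 then (n : K) else 0 := by
  split_ifs with h
  · simp [h]
  · rw [geom_sum_eq h, hz, sub_self, zero_div]

lemma isPrimitiveRoot_omegaC {p : ℕ} (hp : p ≠ 0) : IsPrimitiveRoot (omegaC p) p := by
  rw [omegaC, neg_div, Complex.exp_neg]
  exact (Complex.isPrimitiveRoot_exp p hp).inv

lemma sum_conj_omegaC_pow_mul_pow_mul_pow {p : ℕ} (i j l : Fin p) :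
    ∑ k : Fin p, starRingEnd ℂ (omegaC p ^ ((k : ℕ) * i)) * omegaC p ^ ((l : ℕ) * k) *
      omegaC p ^ ((k : ℕ) * j) = if i - j = l then (p : ℂ) else 0 := by
  rcases eq_or_ne p 0 with rfl | hp
  · exact i.elim0
  have : NeZero p := ⟨hp⟩
  have hω := isPrimitiveRoot_omegaC hp
  set ω := omegaC p
  have hconj : starRingEnd ℂ ω = ω⁻¹ := (Complex.inv_eq_conj (hω.norm'_eq_one hp)).symm
  set z := ω ^ ((l : ℕ) + j) / ω ^ (i : ℕ)
  have hterm (k : Fin p) :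
      starRingEnd ℂ (ω ^ ((k : ℕ) * i)) * ω ^ ((l : ℕ) * k) * ω ^ ((k : ℕ) * j) =
        z ^ (k : ℕ) := by
    rw [map_pow, hconj, div_pow, ← pow_mul, ← pow_mul, inv_pow]
    ring
  have hz : z ^ p = 1 := by
    rw [div_pow, pow_right_comm _ _ p, pow_right_comm _ _ p, hω.pow_eq_one, one_pow, one_pow,
      div_one]
  rw [Fintype.sum_congr _ _ hterm, Fin.sum_univ_eq_sum_range (z ^ ·),
    geom_sum_eq_ite_of_pow_eq_one hz]
  refine if_congr ?_ rfl rfl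
  rw [div_eq_one_iff_eq (pow_ne_zero _ (hω.ne_zero hp)),
    (hω.isOfFinOrder hp).pow_eq_pow_iff_modEq, ← hω.eq_orderOf, sub_eq_iff_eq_add, Fin.ext_iff,
    Fin.val_add, Nat.ModEq, Nat.mod_eq_of_lt i.isLt, eq_comm]

lemma conjTranspose_dftMatrix_mul_diagonal_mul_dftMatrix {p : ℕ} (l : Fin p) :
    (dftMatrix p)ᴴ * diagonal (fun k : Fin p => omegaC p ^ ((l : ℕ) * k)) * dftMatrix p =
      circulant (Pi.single l 1) := by
  ext i j
  have hp : (p : ℂ) ≠ 0 := Nat.cast_ne_zero.2 (Fin.pos i).ne'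
  have hsqrt : ((Real.sqrt p : ℂ))⁻¹ * ((Real.sqrt p : ℂ))⁻¹ = (p : ℂ)⁻¹ := by
    rw [← mul_inv, ← Complex.ofReal_mul, Real.mul_self_sqrt (Nat.cast_nonneg p),
      Complex.ofReal_natCast]
  have hentry : ((dftMatrix p)ᴴ * diagonal (fun k : Fin p => omegaC p ^ ((l : ℕ) * k)) *
      dftMatrix p) i j = (p : ℂ)⁻¹ * ∑ k : Fin p, starRingEnd ℂ (omegaC p ^ ((k : ℕ) * i)) *
        omegaC p ^ ((l : ℕ) * k) * omegaC p ^ ((k : ℕ) * j) := by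
    rw [mul_apply, ← hsqrt, Finset.mul_sum]
    simp only [mul_diagonal, dftMatrix, conjTranspose_apply, of_apply, star_mul', star_inv₀,
      Complex.star_def, Complex.conj_ofReal]
    exact Finset.sum_congr rfl fun k _ => by ring
  rw [hentry, sum_conj_omegaC_pow_mul_pow_mul_pow, circulant_apply, Pi.single_apply]
  split_ifs <;> simp [hp]

lemma bcirc_eq_sum_circulant_kronecker {R : Type*} [Semiring R] {m n p : ℕ}
    (A : Fin p → Matrix (Fin m) (Fin n) R) :
    bcirc A = ∑ l, circulant (Pi.single l 1) ⊗ₖ A l := by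
  ext ⟨i, r⟩ ⟨j, c⟩
  simp [bcirc, Matrix.sum_apply, circulant_apply, Pi.single_apply]

lemma blockDiag_dftSlice_eq_sum_diagonal_kronecker {m n p : ℕ}
    (A : Fin p → Matrix (Fin m) (Fin n) ℂ) :
    (Matrix.of fun ir jc => if ir.1 = jc.1 then dftSlice A ir.1 ir.2 jc.2 else 0 :
      Matrix (Fin p × Fin m) (Fin p × Fin n) ℂ) =
      ∑ l : Fin p, diagonal (fun k : Fin p => omegaC p ^ ((l : ℕ) * k)) ⊗ₖ A l := by
  ext ⟨i, r⟩ ⟨j, c⟩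
  simp [dftSlice, Matrix.sum_apply, diagonal_apply]

/-- A block circulant matrix is block diagonalized by the Fourier transform:
`bcirc(A) = (F_pᴴ ⊗ I_m) · blockdiag(Â_1, …, Â_p) · (F_p ⊗ I_n)`. -/
theorem bcirc_eq_dft_blockDiag {m n p : ℕ} (A : Fin p → Matrix (Fin m) (Fin n) ℂ) :
    bcirc A =
      ((dftMatrix p)ᴴ ⊗ₖ (1 : Matrix (Fin m) (Fin m) ℂ)) *
        (Matrix.of fun ir jc =>
          if ir.1 = jc.1 then dftSlice A ir.1 ir.2 jc.2 else 0 :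
          Matrix (Fin p × Fin m) (Fin p × Fin n) ℂ) *
        ((dftMatrix p) ⊗ₖ (1 : Matrix (Fin n) (Fin n) ℂ)) := by
  rw [bcirc_eq_sum_circulant_kronecker, blockDiag_dftSlice_eq_sum_diagonal_kronecker,
    Matrix.mul_sum, Matrix.sum_mul]
  refine Finset.sum_congr rfl fun l _ => ?_
  rw [← conjTranspose_dftMatrix_mul_diagonal_mul_dftMatrix, ← mul_kronecker_mul,
    ← mul_kronecker_mul, Matrix.one_mul, Matrix.mul_one]
end
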